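/- Let r and h be positive integers with r < φ^h, and let s, t be integers with 0 ≤ s ≤ r−1 and 0 ≤ t ≤ r−1. Then there exist nonnegative integers u and v such that u = G(v), u ≡ s (mod r), v ≡ t (mod r), and v has a Fibonacci representation of length at most 2h−1; that is, there is a bit string β = β_1…β_L with L ≤ 2h−1, each β_i ∈ {0,1}, and v = Σ_{i=1}^L β_i F_{i+1}. -/
import Mathlib

noncomputable def goldenphi : ℝ := (1 + Real.sqrt 5) / 2

noncomputable def hofG (x : ℕ) : ℕ := (⌊((x : ℝ) + 1) / goldenphi⌋).toNat

namespace Stmt8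

noncomputable def ψ : ℝ := (1 - Real.sqrt 5) / 2

lemma sqrt5_sq : Real.sqrt 5 ^ 2 = 5 := Real.sq_sqrt (by norm_num)
lemma sqrt5_pos : 0 < Real.sqrt 5 := Real.sqrt_pos.2 (by norm_num)
lemma sqrt5_gt : 2 < Real.sqrt 5 := by nlinarith [sqrt5_sq, sqrt5_pos]
lemma sqrt5_lt : Real.sqrt 5 < 3 := by nlinarith [sqrt5_sq, sqrt5_pos]

lemma phi_pos : 0 < goldenphi := by unfold goldenphi; nlinarith [sqrt5_gt]
lemma one_lt_phi : 1 < goldenphi := by unfold goldenphi; nlinarith [sqrt5_gt]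
lemma phi_lt_two : goldenphi < 2 := by unfold goldenphi; nlinarith [sqrt5_lt]
lemma psi_neg : ψ < 0 := by unfold ψ; nlinarith [sqrt5_gt]
lemma neg_one_lt_psi : -1 < ψ := by unfold ψ; nlinarith [sqrt5_lt]
lemma phi_add_psi : goldenphi + ψ = 1 := by unfold goldenphi ψ; ring
lemma phi_mul_psi : goldenphi * ψ = -1 := by
  unfold goldenphi ψ; nlinarith [sqrt5_sq]
lemma psi_sq : ψ ^ 2 = ψ + 1 := by unfold ψ; nlinarith [sqrt5_sq]
lemma phi_sq : goldenphi ^ 2 = goldenphi + 1 := by unfold goldenphi; nlinarith [sqrt5_sq]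

lemma psi_abs : |ψ| = goldenphi⁻¹ := by
  have h1 : ψ = -goldenphi⁻¹ := by
    have hφ : goldenphi ≠ 0 := ne_of_gt phi_pos
    field_simp
    linear_combination phi_mul_psi
  rw [h1, abs_neg, abs_inv, abs_of_pos phi_pos]

lemma psi_step (k : ℕ) : ψ ^ (k + 2) = ψ ^ (k + 1) + ψ ^ k := by
  have : ψ ^ (k + 2) = ψ ^ k * ψ ^ 2 := by ring
  rw [this, psi_sq]; ring

lemma fib_phi : ∀ n : ℕ, (Nat.fib n : ℝ) * goldenphi = (Nat.fib (n + 1) : ℝ) - ψ ^ n := by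
  intro n
  induction n using Nat.strong_induction_on with
  | _ n ih =>
    match n with
    | 0 => simp
    | 1 => simp; linarith [phi_add_psi]
    | (k + 2) =>
      have h1 := ih k (by omega)
      have h2 := ih (k + 1) (by omega)
      have hf : (Nat.fib (k + 2) : ℝ) = Nat.fib k + Nat.fib (k + 1) := by
        rw [Nat.fib_add_two]; push_cast; ring
      have hf3 : (Nat.fib (k + 3) : ℝ) = Nat.fib (k + 1) + Nat.fib (k + 2) := by
        rw [show k + 3 = (k + 1) + 2 from rfl, Nat.fib_add_two]; push_cast; ring
      have hp := psi_step k
      have hexp : ((Nat.fib k : ℝ) + Nat.fib (k + 1)) * goldenphi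
          = (Nat.fib k : ℝ) * goldenphi + (Nat.fib (k + 1) : ℝ) * goldenphi := by ring
      rw [hf, hf3, hexp, h1, h2, hp]
      ring

lemma phi_pow : ∀ n : ℕ, goldenphi ^ (n + 1) = (Nat.fib (n + 1) : ℝ) * goldenphi + Nat.fib n := by
  intro n
  induction n with
  | zero => simp
  | succ k ih =>
    have : goldenphi ^ (k + 2) = goldenphi ^ (k + 1) * goldenphi := by ring
    rw [this, ih]
    have hf : (Nat.fib (k + 2) : ℝ) = Nat.fib k + Nat.fib (k + 1) := by
      rw [Nat.fib_add_two]; push_cast; ring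
    rw [hf]
    nlinarith [phi_sq]

lemma cassini : ∀ n : ℕ, (Nat.fib (n + 2) : ℤ) * Nat.fib n - (Nat.fib (n + 1) : ℤ) ^ 2 = (-1) ^ (n + 1) := by
  intro n
  induction n with
  | zero => simp
  | succ k ih =>
    have hF : (Nat.fib (k + 3) : ℤ) = Nat.fib (k + 1) + Nat.fib (k + 2) := by
      rw [show k + 3 = (k + 1) + 2 from rfl, Nat.fib_add_two]; push_cast; ring
    have hF2 : (Nat.fib (k + 2) : ℤ) = Nat.fib k + Nat.fib (k + 1) := by
      rw [Nat.fib_add_two]; push_cast; ring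
    linear_combination (-1 : ℤ) * ih + (Nat.fib (k + 1) : ℤ) * hF - (Nat.fib (k + 2) : ℤ) * hF2


lemma prod_between {a b z : ℝ} (h : (a - z) * (b - z) ≤ 0) : min a b ≤ z ∧ z ≤ max a b := by
  rcases le_total a b with hab | hab
  · rw [min_eq_left hab, max_eq_right hab]
    constructor <;> nlinarith
  · rw [min_eq_right hab, max_eq_left hab]
    constructor <;> nlinarith

lemma between_mono {a b y : ℝ} (hab : a * b ≤ 0) (h : (b - y) * ((a + b) - y) ≤ 0) :
    (a - y) * (b - y) ≤ 0 := by
  obtain ⟨h1, h2⟩ := prod_between h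
  rcases mul_nonpos_iff.mp hab with ⟨ha, hb⟩ | ⟨ha, hb⟩
  · -- 0 ≤ a, b ≤ 0 : y ∈ [b, a+b]
    rw [min_eq_left (by linarith : b ≤ a + b)] at h1
    rw [max_eq_right (by linarith : b ≤ a + b)] at h2
    exact mul_nonpos_of_nonneg_of_nonpos (by linarith) (by linarith)
  · -- a ≤ 0, 0 ≤ b : y ∈ [a+b, b]
    rw [min_eq_right (by linarith : a + b ≤ b)] at h1
    rw [max_eq_left (by linarith : a + b ≤ b)] at h2
    exact mul_nonpos_of_nonpos_of_nonneg (by linarith) (by linarith)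

lemma sign_trans {a b c : ℝ} (h1 : a * b ≤ 0) (h2 : 0 < b * c) : a * c ≤ 0 := by
  rcases lt_trichotomy b 0 with hb | hb | hb
  · have hc : c < 0 := by nlinarith
    have ha : 0 ≤ a := by nlinarith
    exact mul_nonpos_of_nonneg_of_nonpos ha (le_of_lt hc)
  · rw [hb] at h2; simp at h2
  · have hc : 0 < c := by nlinarith
    have ha : a ≤ 0 := by nlinarith
    exact mul_nonpos_of_nonpos_of_nonneg ha (le_of_lt hc)

lemma cov (K : ℕ) : ∀ n j : ℕ, j + n = K + 2 → 1 ≤ j →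
    ∀ y : ℝ, (ψ ^ (j - 1) - y) * (ψ ^ j - y) ≤ 0 →
    ∃ m p : ℕ, Nat.fib (j - 1) + m ≤ Nat.fib (K + 1) ∧
      (ψ ^ K - (y - ((m : ℝ) * goldenphi - (p : ℝ)))) *
        (ψ ^ (K + 1) - (y - ((m : ℝ) * goldenphi - (p : ℝ)))) ≤ 0 := by
  intro n
  induction n using Nat.strong_induction_on with
  | _ n ih =>
    intro j hj hj1 y hy
    match n, hj with
    | 0, hj =>
      have hjK : j = K + 2 := by omega
      subst hjK
      refine ⟨0, 0, by simp, ?_⟩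
      have hsimp : y - ((0 : ℕ) * goldenphi - ((0 : ℕ) : ℝ)) = y := by push_cast; ring
      rw [hsimp]
      have hy' : (ψ ^ (K + 1) - y) * (ψ ^ (K + 2) - y) ≤ 0 := by
        simpa using hy
      have hk : ψ ^ (K + 2) = ψ ^ K + ψ ^ (K + 1) := by rw [psi_step]; ring
      rw [hk] at hy'
      have hab : ψ ^ K * ψ ^ (K + 1) ≤ 0 := by
        have h1 : ψ ^ K * ψ ^ (K + 1) = (ψ ^ 2) ^ K * ψ := by ring
        rw [h1]
        have h2 : (0 : ℝ) ≤ (ψ ^ 2) ^ K := by positivity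
        nlinarith [psi_neg]
      exact between_mono hab hy'
    | 1, hj =>
      have hjK : j = K + 1 := by omega
      subst hjK
      refine ⟨0, 0, ?_, ?_⟩
      · simpa using Nat.fib_mono (show K + 1 - 1 ≤ K + 1 by omega)
      · have hsimp : y - ((0 : ℕ) * goldenphi - ((0 : ℕ) : ℝ)) = y := by push_cast; ring
        rw [hsimp]
        simpa using hy
    | (n + 2), hj =>
      have hjK : j ≤ K := by omega
      obtain ⟨i, rfl⟩ : ∃ i, j = i + 1 := ⟨j - 1, by omega⟩
      by_cases hc : (ψ ^ (i + 1) - y) * (ψ ^ (i + 2) - y) ≤ 0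
      · obtain ⟨m, p, hb, hprod⟩ := ih (n + 1) (by omega) (i + 2) (by omega) (by omega) y (by
          simpa using hc)
        refine ⟨m, p, ?_, hprod⟩
        have := Nat.fib_mono (show i + 1 - 1 ≤ i + 2 - 1 by omega)
        omega
      · push_neg at hc
        set y' := y + ψ ^ (i + 1) with hy'def
        have hyp2 : (ψ ^ (i + 3 - 1) - y') * (ψ ^ (i + 3) - y') ≤ 0 := by
          have e1 : ψ ^ (i + 3 - 1) - y' = ψ ^ (i + 1 - 1) - y := by
            simp only [show i + 3 - 1 = i + 2 from rfl, show i + 1 - 1 = i from rfl]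
            rw [psi_step i]; ring
          have e2 : ψ ^ (i + 3) - y' = ψ ^ (i + 2) - y := by
            rw [show i + 3 = (i + 1) + 2 from rfl, psi_step (i + 1)]; ring
          rw [e1, e2]
          have := sign_trans hy hc
          simpa using this
        obtain ⟨m', p', hb', hprod'⟩ := ih n (by omega) (i + 3) (by omega) (by omega) y' hyp2
        refine ⟨Nat.fib (i + 1) + m', Nat.fib (i + 2) + p', ?_, ?_⟩
        · have hfib : Nat.fib (i + 1 - 1) + Nat.fib (i + 1) = Nat.fib (i + 2) := by
            simp only [show i + 1 - 1 = i from rfl]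
            exact (Nat.fib_add_two).symm
          have : Nat.fib (i + 3 - 1) + m' ≤ Nat.fib (K + 1) := hb'
          simp only [show i + 3 - 1 = i + 2 from rfl] at this
          omega
        · have key : y - (((Nat.fib (i + 1) + m' : ℕ) : ℝ) * goldenphi - ((Nat.fib (i + 2) + p' : ℕ) : ℝ))
              = y' - ((m' : ℝ) * goldenphi - (p' : ℝ)) := by
            push_cast
            have := fib_phi (i + 1)
            rw [hy'def]
            linarith [fib_phi (i + 1)]
          rw [key]
          exact hprod'

lemma reprFib : ∀ L n : ℕ, n + 2 ≤ Nat.fib (L + 3) →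
    ∃ β : ℕ → ℕ, (∀ i, β i = 0 ∨ β i = 1) ∧ n = ∑ i ∈ Finset.Icc 1 L, β i * Nat.fib (i + 1) := by
  intro L
  induction L with
  | zero =>
    intro n hn
    have hf : Nat.fib (0 + 3) = 2 := rfl
    have : n = 0 := by omega
    exact ⟨fun _ => 0, fun i => Or.inl rfl, by simp [this]⟩
  | succ L ihL =>
    intro n hn
    have hfib4 : Nat.fib (L + 1 + 3) = Nat.fib (L + 2) + Nat.fib (L + 3) := by
      rw [show L + 1 + 3 = (L + 2) + 2 from rfl, Nat.fib_add_two]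
    have hfib3 : Nat.fib (L + 3) = Nat.fib (L + 1) + Nat.fib (L + 2) := by
      rw [show L + 3 = (L + 1) + 2 from rfl, Nat.fib_add_two]
    have hpos : 0 < Nat.fib (L + 1) := Nat.fib_pos.2 (by omega)
    by_cases hcase : Nat.fib (L + 2) ≤ n
    · obtain ⟨β, hβ, hsum⟩ := ihL (n - Nat.fib (L + 2)) (by omega)
      refine ⟨fun i => if i = L + 1 then 1 else β i, fun i => ?_, ?_⟩
      · by_cases hi : i = L + 1
        · simp [hi]
        · simp [hi]; exact hβ i
      · rw [Finset.sum_Icc_succ_top (by omega : 1 ≤ L + 1)]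
        beta_reduce
        rw [if_pos rfl, show Nat.fib (L + 1 + 1) = Nat.fib (L + 2) from rfl]
        have hcg : ∑ i ∈ Finset.Icc 1 L, (if i = L + 1 then 1 else β i) * Nat.fib (i + 1)
            = ∑ i ∈ Finset.Icc 1 L, β i * Nat.fib (i + 1) := by
          apply Finset.sum_congr rfl
          intro i hi
          have : i ≠ L + 1 := by
            have := Finset.mem_Icc.mp hi; omega
          simp [this]
        rw [hcg, ← hsum]
        omega
    · obtain ⟨β, hβ, hsum⟩ := ihL n (by omega)
      refine ⟨fun i => if i = L + 1 then 0 else β i, fun i => ?_, ?_⟩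
      · by_cases hi : i = L + 1
        · simp [hi]
        · simp [hi]; exact hβ i
      · rw [Finset.sum_Icc_succ_top (by omega : 1 ≤ L + 1)]
        beta_reduce
        rw [if_pos rfl, show Nat.fib (L + 1 + 1) = Nat.fib (L + 2) from rfl]
        have hcg : ∑ i ∈ Finset.Icc 1 L, (if i = L + 1 then 0 else β i) * Nat.fib (i + 1)
            = ∑ i ∈ Finset.Icc 1 L, β i * Nat.fib (i + 1) := by
          apply Finset.sum_congr rfl
          intro i hi
          have : i ≠ L + 1 := by
            have := Finset.mem_Icc.mp hi; omega
          simp [this]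
        rw [hcg, ← hsum]
        omega

-- Lucas-type identity: fib (h+1) * (fib (h+1) + fib (h-1)) = fib (2h+1) + (-1)^h, for h = k+1
lemma lucas_id (k : ℕ) :
    (Nat.fib (k + 2) : ℤ) * (Nat.fib (k + 2) + Nat.fib k) = Nat.fib (2 * k + 3) + (-1) ^ (k + 1) := by
  have hadd := Nat.fib_add (k + 1) (k + 1)
  have hadd' : (Nat.fib (2 * k + 3) : ℤ) = (Nat.fib (k + 1) : ℤ) * Nat.fib (k + 1)
      + (Nat.fib (k + 2) : ℤ) * Nat.fib (k + 2) := by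
    have : 2 * k + 3 = (k + 1) + (k + 1) + 1 := by omega
    rw [this, hadd]
    push_cast; ring
  have hcas := cassini k
  linear_combination (-1 : ℤ) * hadd' + hcas

-- bound: r * fib (h+1) ≤ fib (2h+1) - 1  (as integers), given r < φ^h, r ≥ 2, h ≥ 2
lemma rfib_bound (r h : ℕ) (hr2 : 2 ≤ r) (hh2 : 2 ≤ h) (hrh : (r : ℝ) < goldenphi ^ h) :
    (r : ℤ) * Nat.fib (h + 1) ≤ (Nat.fib (2 * h + 1) : ℤ) - 1 := by
  obtain ⟨k, rfl⟩ : ∃ k, h = k + 1 := ⟨h - 1, by omega⟩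
  have hk1 : 1 ≤ k := by omega
  have hφh : goldenphi ^ (k + 1) = (Nat.fib (k + 2) : ℝ) + Nat.fib k - ψ ^ (k + 1) := by
    rw [phi_pow k]
    have := fib_phi (k + 1)
    rw [show k + 1 + 1 = k + 2 from rfl] at this
    linarith
  have hF2 : 2 ≤ Nat.fib (k + 2) := by
    have := Nat.fib_mono (show 3 ≤ k + 2 by omega)
    simpa [show Nat.fib 3 = 2 from rfl] using this
  have hL := lucas_id k
  have h2k : 2 * (k + 1) + 1 = 2 * k + 3 := by omega
  rw [h2k]
  rcases Nat.even_or_odd (k + 1) with he | ho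
  · -- h even : ψ^h > 0, r ≤ fib(k+2) + fib k - 1
    have hψ : 0 < ψ ^ (k + 1) := Even.pow_pos he (ne_of_lt psi_neg)
    have hrlt : (r : ℝ) < (Nat.fib (k + 2) : ℝ) + Nat.fib k := by linarith [hrh, hφh]
    have hrn : r < Nat.fib (k + 2) + Nat.fib k := by exact_mod_cast hrlt
    have hrZ : (r : ℤ) ≤ (Nat.fib (k + 2) : ℤ) + Nat.fib k - 1 := by
      have : (r : ℤ) < (Nat.fib (k + 2) : ℤ) + Nat.fib k := by exact_mod_cast hrn
      omega
    have he1 : ((-1 : ℤ)) ^ (k + 1) = 1 := Even.neg_one_pow he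
    rw [he1] at hL
    have hmul : (r : ℤ) * Nat.fib (k + 2) ≤ ((Nat.fib (k + 2) : ℤ) + Nat.fib k - 1) * Nat.fib (k + 2) :=
      mul_le_mul_of_nonneg_right hrZ (by positivity)
    have hF2Z : (2 : ℤ) ≤ Nat.fib (k + 2) := by exact_mod_cast hF2
    nlinarith [hmul, hL, hF2Z]
  · -- h odd : ψ^h > -1, r ≤ fib(k+2) + fib k
    have habs1 : |ψ| < 1 := by
      rw [psi_abs]
      exact inv_lt_one_of_one_lt₀ one_lt_phi
    have habs : |ψ ^ (k + 1)| ≤ |ψ| := by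
      rw [abs_pow]
      exact pow_le_of_le_one (abs_nonneg ψ) (le_of_lt habs1) (by omega)
    have hψ : -1 < ψ ^ (k + 1) := by
      have := neg_abs_le (ψ ^ (k + 1))
      linarith
    have hrlt : (r : ℝ) < (Nat.fib (k + 2) : ℝ) + Nat.fib k + 1 := by linarith [hrh, hφh]
    have hrn : r < Nat.fib (k + 2) + Nat.fib k + 1 := by exact_mod_cast hrlt
    have hrZ : (r : ℤ) ≤ (Nat.fib (k + 2) : ℤ) + Nat.fib k := by
      have : r ≤ Nat.fib (k + 2) + Nat.fib k := by omega
      exact_mod_cast this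
    have ho1 : ((-1 : ℤ)) ^ (k + 1) = -1 := Odd.neg_one_pow ho
    rw [ho1] at hL
    have hmul : (r : ℤ) * Nat.fib (k + 2) ≤ ((Nat.fib (k + 2) : ℤ) + Nat.fib k) * Nat.fib (k + 2) :=
      mul_le_mul_of_nonneg_right hrZ (by positivity)
    nlinarith [hmul, hL]

lemma claimA (r h : ℕ) (hr2 : 2 ≤ r) (hh2 : 2 ≤ h) (hrh : (r : ℝ) < goldenphi ^ h) :
    ((r : ℝ) * Nat.fib (h + 1)) * goldenphi ≤ (Nat.fib (2 * h + 2) : ℝ) - 1 := by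
  have hrF := rfib_bound r h hr2 hh2 hrh
  have hrFr : (r : ℝ) * Nat.fib (h + 1) ≤ (Nat.fib (2 * h + 1) : ℝ) - 1 := by exact_mod_cast hrF
  have h1 : ((r : ℝ) * Nat.fib (h + 1)) * goldenphi ≤ ((Nat.fib (2 * h + 1) : ℝ) - 1) * goldenphi :=
    mul_le_mul_of_nonneg_right hrFr (le_of_lt phi_pos)
  have hfp := fib_phi (2 * h + 1)
  rw [show 2 * h + 1 + 1 = 2 * h + 2 from rfl] at hfp
  have habs1 : |ψ| ≤ 1 := by
    rw [psi_abs]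
    exact le_of_lt (inv_lt_one_of_one_lt₀ one_lt_phi)
  have habs : |ψ ^ (2 * h + 1)| ≤ |ψ| := by
    rw [abs_pow]
    exact pow_le_of_le_one (abs_nonneg ψ) habs1 (by omega)
  have hψlow : ψ ≤ ψ ^ (2 * h + 1) := by
    have h2 := neg_abs_le (ψ ^ (2 * h + 1))
    have h3 : |ψ| = -ψ := abs_of_neg psi_neg
    linarith
  have hpsi1 : ψ = 1 - goldenphi := by linarith [phi_add_psi]
  nlinarith [h1, hfp, hψlow]

end Stmt8

set_option maxHeartbeats 2000000 in
open Stmt8 in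
theorem stmt_8 (r h s t : ℕ) (hr : 0 < r) (hh : 0 < h)
    (hrh : (r : ℝ) < goldenphi ^ h) (hs : s ≤ r - 1) (ht : t ≤ r - 1) :
    ∃ u v : ℕ, u = hofG v ∧ u ≡ s [MOD r] ∧ v ≡ t [MOD r] ∧
      ∃ (L : ℕ) (β : ℕ → ℕ), L ≤ 2 * h - 1 ∧ (∀ i, β i = 0 ∨ β i = 1) ∧
        v = ∑ i ∈ Finset.Icc 1 L, β i * Nat.fib (i + 1) := by
  by_cases hr1 : r = 1
  · -- trivial case r = 1
    subst hr1
    have hs0 : s = 0 := by omega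
    have ht0 : t = 0 := by omega
    subst hs0; subst ht0
    have hG0 : hofG 0 = 0 := by
      unfold hofG
      have h1 : ⌊(((0 : ℕ) : ℝ) + 1) / goldenphi⌋ = 0 := by
        rw [Int.floor_eq_zero_iff, Set.mem_Ico]
        constructor
        · apply div_nonneg
          · norm_num
          · exact (le_of_lt phi_pos)
        · rw [div_lt_one phi_pos]
          push_cast
          linarith [one_lt_phi]
      rw [h1]; rfl
    refine ⟨0, 0, hG0.symm, Nat.ModEq.refl _, Nat.ModEq.refl _, 0, fun _ => 0, by omega,
      fun i => Or.inl rfl, by simp⟩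
  · have hr2 : 2 ≤ r := by omega
    have hh2 : 2 ≤ h := by
      by_contra hcon
      have h1 : h = 1 := by omega
      rw [h1, pow_one] at hrh
      have := phi_lt_two
      have : (r : ℝ) < 2 := by linarith
      have : r < 2 := by exact_mod_cast this
      omega
    obtain ⟨k, hk⟩ : ∃ k, h = k + 1 := ⟨h - 1, by omega⟩
    have hr0 : (0 : ℝ) < r := by positivity
    have hφ := phi_pos
    -- spread and window sizes
    set spread : ℝ := |ψ| ^ k with hspreaddef
    have hspread_pos : 0 ≤ spread := by positivity
    have hsr : spread * r < goldenphi := by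
      have hpk : (0 : ℝ) < goldenphi ^ k := pow_pos phi_pos k
      rw [hspreaddef, psi_abs, inv_pow, mul_comm, ← div_eq_mul_inv, div_lt_iff₀ hpk]
      calc (r : ℝ) < goldenphi ^ h := hrh
        _ = goldenphi * goldenphi ^ k := by rw [hk]; ring
    have hspread_lt : spread < goldenphi / r := by
      rw [lt_div_iff₀ hr0]; exact hsr
    set ε : ℝ := (goldenphi / r - spread) / 2 with hεdef
    have hε : 0 < ε := by rw [hεdef]; linarith
    have hεs : ε + spread < goldenphi / r := by rw [hεdef]; linarith
    set minΨ : ℝ := min (ψ ^ h) (ψ ^ (h + 1)) with hmindef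
    set maxΨ : ℝ := max (ψ ^ h) (ψ ^ (h + 1)) with hmaxdef
    have hsm : maxΨ - minΨ = spread := by
      rw [hmaxdef, hmindef, max_sub_min_eq_abs]
      have he : ψ ^ (h + 1) - ψ ^ h = ψ ^ k := by
        rw [hk, psi_step k]; ring
      rw [he, hspreaddef, abs_pow]
    set Ctop : ℝ := ((t : ℝ) + 1 - s * goldenphi) / r with hCdef
    set x : ℝ := Ctop + minΨ - ε - ψ with hxdef
    set d : ℤ := -⌊x⌋ with hddef
    set y : ℝ := Ctop + (d : ℝ) + minΨ - ε with hydef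
    have hyx : y - ψ = x - ⌊x⌋ := by rw [hydef, hxdef, hddef]; push_cast; ring
    have hy_lo : ψ ≤ y := by
      have := Int.floor_le x
      linarith
    have hy_hi : y < ψ + 1 := by
      have := Int.lt_floor_add_one x
      linarith
    -- apply the covering lemma
    have hcovhyp : (ψ ^ (2 - 1) - y) * (ψ ^ 2 - y) ≤ 0 := by
      have h1 : ψ ^ (2 - 1) - y ≤ 0 := by
        rw [show (2 : ℕ) - 1 = 1 from rfl, pow_one]; linarith
      have h2 : 0 ≤ ψ ^ 2 - y := by rw [psi_sq]; linarith
      exact mul_nonpos_of_nonpos_of_nonneg h1 h2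
    obtain ⟨m, p, hmb, hprod⟩ := cov h h 2 (by omega) (by omega) y hcovhyp
    have hm1 : m + 1 ≤ Nat.fib (h + 1) := by
      have : Nat.fib (2 - 1) = 1 := rfl
      omega
    obtain ⟨hz1, hz2⟩ := prod_between hprod
    set σ : ℝ := (m : ℝ) * goldenphi - (p : ℝ) with hσdef
    have hσup : σ < Ctop + d := by
      have : σ ≤ y - minΨ := by
        have : min (ψ ^ h) (ψ ^ (h + 1)) ≤ y - σ := hz1
        rw [← hmindef] at this
        linarith
      rw [hydef] at this
      linarith
    have hσlo : Ctop + (d : ℝ) - goldenphi / r < σ := by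
      have h1 : y - σ ≤ maxΨ := by
        have : y - σ ≤ max (ψ ^ h) (ψ ^ (h + 1)) := hz2
        rw [← hmaxdef] at this
        exact this
      have h2 : y - maxΨ ≤ σ := by linarith
      rw [hydef] at h2
      linarith
    set J : ℤ := (p : ℤ) + d with hJdef
    set w : ℕ := s + m * r with hwdef
    have hw1 : ((w : ℝ)) * goldenphi < (t : ℝ) + (J : ℝ) * r + 1 := by
      have h1 : ((m : ℝ) * goldenphi - (p : ℝ) - (d : ℝ)) * r < (t : ℝ) + 1 - s * goldenphi := by
        rw [← lt_div_iff₀ hr0, ← hCdef]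
        rw [hσdef] at hσup
        linarith
      rw [hwdef, hJdef]
      push_cast
      nlinarith [h1]
    have hw2 : (t : ℝ) + (J : ℝ) * r + 1 < ((w : ℝ) + 1) * goldenphi := by
      have heq : ((t : ℝ) + 1 - s * goldenphi - goldenphi) / r = Ctop - goldenphi / r := by
        rw [hCdef, sub_div]
      have h1 : ((t : ℝ) + 1 - s * goldenphi - goldenphi) / r
          < (m : ℝ) * goldenphi - (p : ℝ) - (d : ℝ) := by
        rw [heq]
        rw [hσdef] at hσlo
        linarith
      have h2 : (t : ℝ) + 1 - s * goldenphi - goldenphi < ((m : ℝ) * goldenphi - (p : ℝ) - (d : ℝ)) * r :=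
        (div_lt_iff₀ hr0).1 h1
      rw [hwdef, hJdef]
      push_cast
      nlinarith [h2]
    set vZ : ℤ := (t : ℤ) + J * r with hvZdef
    have hvZr : ((vZ : ℤ) : ℝ) = (t : ℝ) + (J : ℝ) * r := by rw [hvZdef]; push_cast; ring
    have hvZpos : 0 ≤ vZ := by
      have hwφ : (0 : ℝ) ≤ (w : ℝ) * goldenphi := by positivity
      have h1 : (-1 : ℝ) < ((vZ : ℤ) : ℝ) := by rw [hvZr]; linarith
      have h2 : (-1 : ℤ) < vZ := by exact_mod_cast h1
      omega
    set v : ℕ := vZ.toNat with hvdef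
    have hvc : ((v : ℕ) : ℝ) = (t : ℝ) + (J : ℝ) * r := by
      rw [hvdef, ← hvZr]
      congr 1
      exact_mod_cast Int.toNat_of_nonneg hvZpos
    -- G(v) = w
    have hG : hofG v = w := by
      unfold hofG
      have hfl : ⌊((v : ℝ) + 1) / goldenphi⌋ = (w : ℤ) := by
        rw [Int.floor_eq_iff]
        constructor
        · rw [le_div_iff₀ phi_pos]
          push_cast
          linarith [hw1, hvc]
        · rw [div_lt_iff₀ phi_pos]
          push_cast
          linarith [hw2, hvc]
      rw [hfl]
      exact Int.toNat_natCast w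
    -- congruences
    have hmodu : w ≡ s [MOD r] := by
      show w % r = s % r
      rw [hwdef]
      exact Nat.add_mul_mod_self_right s m r
    have hmodv : v ≡ t [MOD r] := by
      rw [Nat.modEq_iff_dvd]
      refine ⟨-J, ?_⟩
      have hv : ((v : ℕ) : ℤ) = vZ := Int.toNat_of_nonneg hvZpos
      rw [hv, hvZdef]
      ring
    -- size bound
    have hwle : w + 1 ≤ r * Nat.fib (h + 1) := by
      have h1 : r * (m + 1) ≤ r * Nat.fib (h + 1) := Nat.mul_le_mul_left r hm1
      have h2 : r * (m + 1) = m * r + r := by ring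
      rw [hwdef]
      omega
    have hvFib : v + 2 ≤ Nat.fib (2 * h + 2) := by
      have hA := claimA r h hr2 hh2 hrh
      have hwr : ((w : ℝ) + 1) ≤ (r : ℝ) * Nat.fib (h + 1) := by
        have := hwle
        push_cast
        exact_mod_cast this
      have hB : ((w : ℝ) + 1) * goldenphi ≤ ((r : ℝ) * Nat.fib (h + 1)) * goldenphi :=
        mul_le_mul_of_nonneg_right hwr (le_of_lt phi_pos)
      have hreal : ((v : ℕ) : ℝ) + 2 < (Nat.fib (2 * h + 2) : ℝ) := by
        linarith [hw2, hvc, hB, hA]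
      have : ((v + 2 : ℕ) : ℝ) < ((Nat.fib (2 * h + 2) : ℕ) : ℝ) := by push_cast; linarith
      exact le_of_lt (by exact_mod_cast this)
    obtain ⟨β, hβ, hsum⟩ := reprFib (2 * h - 1) v (by
      rw [show 2 * h - 1 + 3 = 2 * h + 2 by omega]
      exact hvFib)
    exact ⟨w, v, hG.symm, hmodu, hmodv, 2 * h - 1, β, le_refl _, hβ, hsum⟩
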